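/- Let A be a self-adjoint operator on a Hilbert space H, bounded below, with spectral measure E. Suppose Φ₀ ∈ H satisfies E((−∞,0))Φ₀ ≠ 0. Define Φ_t = E({0})Φ₀ + ∫_{(0,∞)} cos(t√λ) dE(λ)Φ₀ + ∫_{(−∞,0)} cosh(t√(−λ)) dE(λ)Φ₀. Then there exist constants C > 0 and ε > 0 with ‖Φ_t‖ ≥ C·cosh(t√ε) for all t, so ‖Φ_t‖ grows exponentially as t → ∞. -/

import Mathlib

open MeasureTheory

/-- The wave-evolution kernel f_t(λ) = cos(t√λ) for λ ≥ 0 and cosh(t√(−λ)) for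
λ < 0 (so f_t(0) = 1, matching the E({0}) term). -/
noncomputable def waveKernel (t lam : ℝ) : ℝ :=
  if lam < 0 then Real.cosh (t * Real.sqrt (-lam)) else Real.cos (t * Real.sqrt lam)

lemma waveKernel_continuous (t : ℝ) : Continuous (waveKernel t) := by
  have h : waveKernel t = fun lam =>
      if (0 : ℝ) ≤ lam then Real.cos (t * Real.sqrt lam)
      else Real.cosh (t * Real.sqrt (-lam)) := by
    funext lam
    unfold waveKernel
    rcases lt_or_ge lam 0 with h | h
    · simp [h, not_le.2 h]
    · simp [not_lt.2 h, h]
  rw [h]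
  exact Continuous.if_le (by fun_prop) (by fun_prop) continuous_const continuous_id
    (by intro x hx; simp [← hx])

/-- Let A be self-adjoint with spectral (scalar) measure
μ = ⟨Φ₀, E(·)Φ₀⟩ (encoded by the functional-calculus pairing hypothesis `hμ`),
whose support is bounded below, and suppose E((−∞,0))Φ₀ ≠ 0, i.e. μ((−∞,0)) > 0.
Let Φ_t = E({0})Φ₀ + ∫_{(0,∞)} cos(t√λ) dE(λ)Φ₀ + ∫_{(−∞,0)} cosh(t√(−λ)) dE(λ)Φ₀,
i.e. Φ_t = f_t(A)Φ₀ with f_t = waveKernel t. Then there are C > 0 and ε > 0 with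
‖Φ_t‖ ≥ C·cosh(t√ε) for all t ≥ 0, so ‖Φ_t‖ grows exponentially. -/
theorem unstable_mode_exponential_growth
    {H : Type*} [NormedAddCommGroup H] [InnerProductSpace ℂ H] [CompleteSpace H]
    (A : H →L[ℂ] H) (hA : IsSelfAdjoint A)
    (Φ₀ : H) (μ : Measure ℝ) [IsFiniteMeasure μ]
    (hμ : ∀ g : ℝ → ℝ, Continuous g →
      (inner ℂ Φ₀ (cfc g A Φ₀) : ℂ) = ((∫ x, g x ∂μ : ℝ) : ℂ))
    (hbdd : ∃ m : ℝ, μ (Set.Iio m) = 0)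
    (hneg : 0 < μ (Set.Iio 0))
    (Φ : ℝ → H) (hΦ : ∀ t, Φ t = cfc (waveKernel t) A Φ₀) :
    ∃ C > (0 : ℝ), ∃ ε > (0 : ℝ), ∀ t : ℝ, 0 ≤ t →
      C * Real.cosh (t * Real.sqrt ε) ≤ ‖Φ t‖ := by
  classical
  obtain ⟨m₀, hm₀⟩ := hbdd
  set m : ℝ := min m₀ (-1) with hmdef
  have hmneg : m < 0 := lt_of_le_of_lt (min_le_right _ _) (by norm_num)
  have hmnull : μ (Set.Iio m) = 0 :=
    measure_mono_null (Set.Iio_subset_Iio (min_le_left _ _)) hm₀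
  -- find ε > 0 with μ (Iio (-ε)) ≠ 0
  have hex : ∃ ε : ℝ, 0 < ε ∧ μ (Set.Iio (-ε)) ≠ 0 := by
    by_contra hcon
    push_neg at hcon
    have hsub : Set.Iio (0 : ℝ) ⊆ ⋃ n : ℕ, Set.Iio (-(1 / (n + 1 : ℝ))) := by
      intro x hx
      obtain ⟨n, hn⟩ := exists_nat_one_div_lt (show (0 : ℝ) < -x by
        simpa using neg_pos.2 (Set.mem_Iio.mp hx))
      exact Set.mem_iUnion.2 ⟨n, by simp only [Set.mem_Iio]; linarith⟩
    have h0 : μ (Set.Iio 0) = 0 :=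
      measure_mono_null hsub (measure_iUnion_null fun n => hcon _ (by positivity))
    exact hneg.ne' h0
  obtain ⟨ε, hε, hμε⟩ := hex
  set s := Set.Iio (-ε) with hsdef
  have hμs : (0 : ℝ) < (μ s).toReal := ENNReal.toReal_pos hμε (measure_ne_top μ s)
  refine ⟨Real.sqrt ((μ s).toReal), Real.sqrt_pos.2 hμs, ε, hε, ?_⟩
  intro t ht
  have hg : Continuous (waveKernel t) := waveKernel_continuous t
  have hg2 : Continuous (fun x => waveKernel t x ^ 2) := by fun_prop
  -- ‖Φ t‖² = ∫ g²
  set T := cfc (waveKernel t) A with hT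
  have hsa : IsSelfAdjoint T := cfc_predicate _ A
  have hadj : ContinuousLinearMap.adjoint T = T := by
    rw [← ContinuousLinearMap.star_eq_adjoint]; exact hsa.star_eq
  have hmul : cfc (fun x => waveKernel t x ^ 2) A = T * T := by
    rw [show (fun x => waveKernel t x ^ 2) = fun x => waveKernel t x * waveKernel t x by
      funext x; ring]
    exact cfc_mul _ _ A
  have h1 := hμ (fun x => waveKernel t x ^ 2) hg2
  rw [hmul] at h1
  have h2 : (inner ℂ Φ₀ ((T * T) Φ₀) : ℂ) = inner ℂ (Φ t) (Φ t) := by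
    rw [hΦ, ← hT, ContinuousLinearMap.mul_apply,
      ← ContinuousLinearMap.adjoint_inner_right T Φ₀ (T Φ₀), hadj]
  have hsq : ‖Φ t‖ ^ 2 = ∫ x, waveKernel t x ^ 2 ∂μ := by
    have h3 : (inner ℂ (Φ t) (Φ t) : ℂ) = ((∫ x, waveKernel t x ^ 2 ∂μ : ℝ) : ℂ) := by
      rw [← h2]; exact h1
    have h4 : RCLike.re (inner ℂ (Φ t) (Φ t) : ℂ) = ∫ x, waveKernel t x ^ 2 ∂μ := by
      rw [h3]; simp
    rw [← inner_self_eq_norm_sq (𝕜 := ℂ) (Φ t)]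
    exact h4
  -- a.e. x, m ≤ x
  have hae : ∀ᵐ x ∂μ, m ≤ x := by
    rw [ae_iff]
    simp only [not_le]
    exact hmnull
  -- integrability of g²
  set K : ℝ := max 1 (Real.cosh (t * Real.sqrt (-m)) ^ 2) with hK
  have hbound : ∀ x : ℝ, m ≤ x → ‖waveKernel t x ^ 2‖ ≤ K := by
    intro x hx
    rw [Real.norm_eq_abs, abs_of_nonneg (sq_nonneg _)]
    unfold waveKernel
    split_ifs with hx0
    · refine le_max_of_le_right ?_
      have hc : Real.cosh (t * Real.sqrt (-x)) ≤ Real.cosh (t * Real.sqrt (-m)) := by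
        rw [Real.cosh_le_cosh]
        rw [abs_of_nonneg (by positivity), abs_of_nonneg (by positivity)]
        exact mul_le_mul_of_nonneg_left
          (Real.sqrt_le_sqrt (by linarith)) ht
      exact pow_le_pow_left₀ (Real.cosh_pos _).le hc 2
    · exact le_max_of_le_left (Real.cos_sq_le_one _)
  have hint : Integrable (fun x => waveKernel t x ^ 2) μ := by
    refine Integrable.mono' (integrable_const K) hg2.aestronglyMeasurable ?_
    filter_upwards [hae] with x hx using hbound x hx
  -- lower bound on the integral
  have hlow : Real.cosh (t * Real.sqrt ε) ^ 2 * (μ s).toReal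
      ≤ ∫ x, waveKernel t x ^ 2 ∂μ := by
    have h4 : Real.cosh (t * Real.sqrt ε) ^ 2 * (μ s).toReal
        ≤ ∫ x in s, waveKernel t x ^ 2 ∂μ := by
      rw [mul_comm]
      change μ.real s • Real.cosh (t * Real.sqrt ε) ^ 2 ≤ _
      refine setIntegral_ge_of_const_le measurableSet_Iio (measure_ne_top μ s) ?_
        hint.integrableOn
      intro x hx
      rw [hsdef, Set.mem_Iio] at hx
      have hx0 : x < 0 := by linarith
      unfold waveKernel
      rw [if_pos hx0]
      have hc : Real.cosh (t * Real.sqrt ε) ≤ Real.cosh (t * Real.sqrt (-x)) := by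
        rw [Real.cosh_le_cosh]
        rw [abs_of_nonneg (by positivity), abs_of_nonneg (by positivity)]
        exact mul_le_mul_of_nonneg_left (Real.sqrt_le_sqrt (by linarith)) ht
      exact pow_le_pow_left₀ (Real.cosh_pos _).le hc 2
    refine h4.trans (setIntegral_le_integral hint ?_)
    exact Filter.Eventually.of_forall fun x => sq_nonneg _
  -- conclude
  have key : (Real.sqrt ((μ s).toReal) * Real.cosh (t * Real.sqrt ε)) ^ 2 ≤ ‖Φ t‖ ^ 2 := by
    rw [mul_pow, Real.sq_sqrt hμs.le, hsq]
    calc (μ s).toReal * Real.cosh (t * Real.sqrt ε) ^ 2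
        = Real.cosh (t * Real.sqrt ε) ^ 2 * (μ s).toReal := by ring
      _ ≤ _ := hlow
  have h5 := Real.sqrt_le_sqrt key
  rwa [Real.sqrt_sq (by positivity), Real.sqrt_sq (norm_nonneg _)] at h5
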